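/- The set of indices of recursive well-founded trees on ℕ is Π¹₁-complete: it is Π¹₁, and every Π¹₁ subset of ℕ is many-one reducible to it. -/

import Mathlib

/-- A set `A ⊆ ℕ` is Π¹₁ if membership can be expressed by a single universal
second-order (function) quantifier followed by an arithmetical matrix; by
Kleene's normal form theorem the matrix may be taken computable. -/
def Pi11 (A : Set ℕ) : Prop :=
  ∃ R : ℕ → List ℕ → Bool, Computable₂ R ∧
    ∀ n, n ∈ A ↔ ∀ f : ℕ → ℕ, ∃ k, R n (List.ofFn fun i : Fin k => f i) = true

open Nat.Partrec (Code)

/-- The `e`-th partial computable function. -/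
def evalCode (e n : ℕ) : Part ℕ :=
  Nat.Partrec.Code.eval (Denumerable.ofNat Nat.Partrec.Code e) n

/-- `e` is an index of a recursive tree on ℕ: the `e`-th partial computable
function is total and decides (value `1` = membership) a set of finite
sequences closed under initial segments. -/
def IsTreeIndex (e : ℕ) : Prop :=
  (∀ s : List ℕ, (evalCode e (Encodable.encode s)).Dom) ∧
  (1 ∈ evalCode e (Encodable.encode ([] : List ℕ))) ∧
  (∀ s t : List ℕ, s <+: t → 1 ∈ evalCode e (Encodable.encode t) →
    1 ∈ evalCode e (Encodable.encode s))

/-- `e` is an index of a well-founded recursive tree: the tree it decides has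
no infinite branch. -/
def WFTreeIndex (e : ℕ) : Prop :=
  IsTreeIndex e ∧
  ∀ f : ℕ → ℕ, ∃ k : ℕ,
    ¬ 1 ∈ evalCode e (Encodable.encode (List.ofFn fun i : Fin k => f i))

/-! Being a well-founded tree index is a conjunction of Π⁰₂ conditions (the code is total,
accepts the root, and accepts every prefix of an accepted sequence) with "every `f` leaves the
tree", which is Σ⁰₁ in `f ↾ k` once the code is total. Π¹₁ sets are closed under
intersection, and both kinds of condition are Π¹₁: a number quantifier is absorbed into the
function quantifier, either by bounding it with `k` or by reading its value off `f 0`.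

Conversely, if `n ∈ A ↔ ∀ f, ∃ k, R n (f ↾ k)`, the sequences none of whose proper initial
segments satisfy `R n` form a recursive tree, uniformly in `n` by the s-m-n theorem, and its
infinite branches are exactly the `f` with `R n (f ↾ k)` false for all `k`. -/

open Encodable Denumerable

local notation:max f " ↾ " k:max => List.ofFn fun i : Fin k => f (i : ℕ)

theorem ofFn_succ_eq_cons (f : ℕ → ℕ) (k : ℕ) :
    f ↾ (k + 1) = f 0 :: (fun i => f (i + 1)) ↾ k := by
  simp [List.ofFn_succ]

theorem take_ofFn {f : ℕ → ℕ} {j k : ℕ} (h : j ≤ k) : (f ↾ k).take j = f ↾ j := by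
  apply List.ext_getElem <;> simp [h]

open Primrec in
theorem PrimrecRel.isPrefix {α : Type*} [Primcodable α] [DecidableEq α] :
    PrimrecRel (@List.IsPrefix α) :=
  (Primrec.eq.comp₂ (list_take.comp₂ (list_length.comp₂ Primrec₂.left) Primrec₂.right)
    Primrec₂.left).of_eq fun _ _ => eq_comm.trans List.prefix_iff_eq_take.symm

open Primrec in
theorem PrimrecRel.exists_lt' {α : Type*} [Primcodable α] {R : α → ℕ → Prop}
    (hR : PrimrecRel R) {n : α → ℕ} (hn : Primrec n) :
    PrimrecPred fun a => ∃ x < n a, R a x :=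
  (hR.swap.exists_mem_list.comp (list_range.comp hn) Primrec.id).of_eq (by simp)

open Computable in
theorem Computable.decide_forall_lt {α : Type*} [Primcodable α] {p : α → ℕ → Bool}
    (hp : Computable₂ p) {n : α → ℕ} (hn : Computable n) :
    Computable fun a => decide (∀ j < n a, p a j = true) := by
  have hrec : Computable₂ fun a n => decide (∀ j < n, p a j = true) := by
    refine (nat_rec snd (const true) (Primrec.and.to_comp.comp (snd.comp snd)
      (hp.comp (fst.comp fst) (fst.comp snd))).to₂).of_eq ?_
    rintro ⟨a, n⟩
    induction n with
    | zero => simp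
    | succ n ih =>
      simp only at ih ⊢
      rw [ih, Bool.eq_iff_iff, Bool.and_eq_true, decide_eq_true_eq, decide_eq_true_eq,
        Nat.forall_lt_succ_right]
  exact hrec.comp Computable.id hn

theorem Pi11.of_computablePred {p : ℕ → List ℕ → Prop}
    (hp : ComputablePred fun x : ℕ × List ℕ => p x.1 x.2) :
    Pi11 {n | ∀ f : ℕ → ℕ, ∃ k, p n (f ↾ k)} := by
  obtain ⟨R, hR, hp⟩ := ComputablePred.computable_iff.1 hp
  exact ⟨fun n σ => R (n, σ), hR, fun n => by simp [fun σ => congrFun hp (n, σ)]⟩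

-- `f 0` chooses the matrix against which the tail of `f` is tested.
open Computable in
theorem Pi11.inter {A B : Set ℕ} (hA : Pi11 A) (hB : Pi11 B) : Pi11 (A ∩ B) := by
  obtain ⟨R₁, hR₁, hA⟩ := hA
  obtain ⟨R₂, hR₂, hB⟩ := hB
  refine ⟨fun n σ => !decide (σ = []) &&
    cond (decide (σ.headI = 0)) (R₁ n σ.tail) (R₂ n σ.tail), ?_, fun n => ?_⟩
  · have htail : Computable fun x : ℕ × List ℕ => x.2.tail :=
      Primrec.list_tail.to_comp.comp snd
    exact Primrec.and.to_comp.comp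
      (Primrec.not.to_comp.comp (Primrec.eq.decide.to_comp.comp snd (const [])))
      (cond (Primrec.eq.decide.to_comp.comp (Primrec.list_headI.to_comp.comp snd) (const 0))
        (hR₁.comp fst htail) (hR₂.comp fst htail))
  rw [Set.mem_inter_iff, hA, hB]
  constructor
  · rintro ⟨h₁, h₂⟩ f
    rcases Nat.eq_zero_or_pos (f 0) with h0 | h0
    · obtain ⟨k, hk⟩ := h₁ fun i => f (i + 1)
      exact ⟨k + 1, by simpa [ofFn_succ_eq_cons, h0] using hk⟩
    · obtain ⟨k, hk⟩ := h₂ fun i => f (i + 1)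
      exact ⟨k + 1, by simpa [ofFn_succ_eq_cons, h0.ne'] using hk⟩
  · intro h
    constructor <;> intro g
    · obtain ⟨_ | k, hk⟩ := h fun i => Nat.casesOn i 0 g
      · simp at hk
      · exact ⟨k, by simpa [ofFn_succ_eq_cons] using hk⟩
    · obtain ⟨_ | k, hk⟩ := h fun i => Nat.casesOn i 1 g
      · simp at hk
      · exact ⟨k, by simpa [ofFn_succ_eq_cons] using hk⟩

-- Bounding `j` and `t` by the length of the prefix turns `∃ k t` into a single `∃ k`.
open Primrec in
theorem Pi11.of_exists {p : ℕ → List ℕ → ℕ → Prop}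
    (hp : PrimrecPred fun x : ℕ × List ℕ × ℕ => p x.1 x.2.1 x.2.2) :
    Pi11 {n | ∀ f : ℕ → ℕ, ∃ k t, p n (f ↾ k) t} := by
  have hp' : PrimrecRel fun (y : (ℕ × List ℕ) × ℕ) (t : ℕ) =>
      p y.1.1 (y.1.2.take y.2) t :=
    hp.comp ((fst.comp (fst.comp fst)).pair
      ((list_take.comp (snd.comp fst) (snd.comp (fst.comp fst))).pair snd))
  have inner : PrimrecRel fun (x : ℕ × List ℕ) (j : ℕ) =>
      ∃ t < x.2.length, p x.1 (x.2.take j) t :=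
    hp'.exists_lt' (list_length.comp (snd.comp fst))
  convert Pi11.of_computablePred (p := fun n σ => ∃ j < σ.length, ∃ t < σ.length,
    p n (σ.take j) t) (inner.exists_lt' (list_length.comp snd)).computablePred using 1
  ext n
  refine forall_congr' fun f => ⟨fun ⟨k, t, h⟩ => ?_, fun ⟨k, j, hj, t, ht, h⟩ => ?_⟩
  · have hlen : (f ↾ (k + t + 1)).length = k + t + 1 := List.length_ofFn
    refine ⟨k + t + 1, k, by omega, t, by omega, ?_⟩
    rwa [take_ofFn (by omega)]
  · simp only [List.length_ofFn] at hj
    rw [take_ofFn hj.le] at h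
    exact ⟨j, t, h⟩

-- `f 0` encodes the instance `a`; `σ ≠ []` excludes the empty prefix, whose `headI` is junk.
open Primrec in
theorem Pi11.of_forall_exists {α : Type*} [Primcodable α] [Inhabited α]
    {p : ℕ → α → ℕ → Prop}
    (hp : PrimrecPred fun x : ℕ × α × ℕ => p x.1 x.2.1 x.2.2) :
    Pi11 {n | ∀ a, ∃ t, p n a t} := by
  have hdecode : Primrec fun σ : List ℕ => (decode (α := α) σ.headI).getD default :=
    option_getD_default.comp (Primrec.decode.comp list_headI)
  have hq : PrimrecPred fun x : ℕ × List ℕ × ℕ =>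
      x.2.1 ≠ [] ∧ p x.1 ((decode (α := α) x.2.1.headI).getD default) x.2.2 :=
    (Primrec.eq.comp (fst.comp snd) (const [])).not.and
      (hp.comp (fst.pair ((hdecode.comp (fst.comp snd)).pair (snd.comp snd))))
  convert Pi11.of_exists
    (p := fun n σ t => σ ≠ [] ∧ p n ((decode σ.headI).getD default) t) hq using 1
  ext n
  refine ⟨fun h f => ?_, fun h a => ?_⟩
  · obtain ⟨t, ht⟩ := h ((decode (f 0)).getD default)
    exact ⟨1, t, by simp, by simpa using ht⟩
  · obtain ⟨_ | k, t, hne, ht⟩ := h fun _ => encode a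
    · simp at hne
    · exact ⟨t, by simpa [ofFn_succ_eq_cons] using ht⟩

def evalnCode (t e n : ℕ) : Option ℕ :=
  Code.evaln t (ofNat Code e) n

open Primrec in
theorem primrec_evalnCode : Primrec fun x : ℕ × ℕ × ℕ => evalnCode x.1 x.2.1 x.2.2 :=
  Code.primrec_evaln.comp
    ((fst.pair ((Primrec.ofNat Code).comp (fst.comp snd))).pair (snd.comp snd))

theorem mem_evalCode_iff {a e n : ℕ} : a ∈ evalCode e n ↔ ∃ t, evalnCode t e n = some a :=
  Code.evaln_complete

theorem evalCode_dom_iff {e n : ℕ} : (evalCode e n).Dom ↔ ∃ t, (evalnCode t e n).isSome := by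
  simp only [Part.dom_iff_mem, mem_evalCode_iff, Option.isSome_iff_exists]
  exact exists_comm

theorem not_mem_evalCode_iff {a e n : ℕ} (h : (evalCode e n).Dom) :
    a ∉ evalCode e n ↔ ∃ t, (evalnCode t e n).isSome ∧ evalnCode t e n ≠ some a := by
  obtain ⟨b, hb⟩ := Part.dom_iff_mem.1 h
  obtain ⟨t, ht⟩ := mem_evalCode_iff.1 hb
  constructor
  · intro ha
    exact ⟨t, by simp [ht], fun hta => ha (Option.some_injective _ (ht.symm.trans hta) ▸ hb)⟩
  · rintro ⟨t', hsome, hne⟩ ha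
    obtain ⟨c, hc⟩ := Option.isSome_iff_exists.1 hsome
    have hca : c = a := Part.mem_unique (mem_evalCode_iff.2 ⟨t', hc⟩) ha
    exact hne (hca ▸ hc)

theorem isTreeIndex_iff {e : ℕ} : IsTreeIndex e ↔
    (∀ s : List ℕ, ∃ t, (evalnCode t e (encode s)).isSome) ∧
    (∃ t, evalnCode t e (encode ([] : List ℕ)) = some 1) ∧
    ∀ x : (List ℕ × List ℕ) × ℕ, ∃ t, x.1.1 <+: x.1.2 →
      evalnCode x.2 e (encode x.1.2) = some 1 → evalnCode t e (encode x.1.1) = some 1 := by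
  simp only [IsTreeIndex, evalCode_dom_iff, ← mem_evalCode_iff]
  refine and_congr_right fun _ => and_congr_right fun _ =>
    ⟨fun h x => ?_, fun h s u hsu hu => ?_⟩
  · by_cases hx : x.1.1 <+: x.1.2 ∧ evalnCode x.2 e (encode x.1.2) = some 1
    · obtain ⟨t, ht⟩ := mem_evalCode_iff.1 (h _ _ hx.1 (mem_evalCode_iff.2 ⟨_, hx.2⟩))
      exact ⟨t, fun _ _ => ht⟩
    · exact ⟨0, fun h₁ h₂ => absurd ⟨h₁, h₂⟩ hx⟩
  · obtain ⟨t₀, ht₀⟩ := mem_evalCode_iff.1 hu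
    obtain ⟨t, ht⟩ := h ((s, u), t₀)
    exact mem_evalCode_iff.2 ⟨t, ht hsu ht₀⟩

theorem wfTreeIndex_iff {e : ℕ} : WFTreeIndex e ↔ IsTreeIndex e ∧
    ∀ f : ℕ → ℕ, ∃ k t, (evalnCode t e (encode (f ↾ k))).isSome ∧
      evalnCode t e (encode (f ↾ k)) ≠ some 1 :=
  and_congr_right fun hT => forall_congr' fun _ => exists_congr fun _ =>
    not_mem_evalCode_iff (hT.1 _)

open Primrec in
theorem pi11_setOf_wfTreeIndex : Pi11 {e | WFTreeIndex e} := by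
  have total : Pi11 {e | ∀ s : List ℕ, ∃ t, (evalnCode t e (encode s)).isSome} :=
    Pi11.of_forall_exists <| Primrec.eq.comp (option_isSome.comp (primrec_evalnCode.comp
      ((snd.comp snd).pair (fst.pair (Primrec.encode.comp (fst.comp snd)))))) (const true)
  have root : Pi11 {e | ∀ _ : Unit, ∃ t, evalnCode t e (encode ([] : List ℕ)) = some 1} :=
    Pi11.of_forall_exists <| Primrec.eq.comp (primrec_evalnCode.comp
      ((snd.comp snd).pair (fst.pair (const _)))) (const _)
  have closed : Pi11 {e | ∀ x : (List ℕ × List ℕ) × ℕ, ∃ t, x.1.1 <+: x.1.2 →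
      evalnCode x.2 e (encode x.1.2) = some 1 → evalnCode t e (encode x.1.1) = some 1} := by
    have hx : Primrec fun y : ℕ × ((List ℕ × List ℕ) × ℕ) × ℕ => y.2.1 := fst.comp snd
    have hprefix : PrimrecPred fun y : ℕ × ((List ℕ × List ℕ) × ℕ) × ℕ =>
        y.2.1.1.1 <+: y.2.1.1.2 :=
      PrimrecRel.isPrefix.comp (fst.comp (fst.comp hx)) (snd.comp (fst.comp hx))
    have haccepts {s : (List ℕ × List ℕ) × ℕ → List ℕ}
        {t : ((List ℕ × List ℕ) × ℕ) × ℕ → ℕ} (hs : Primrec s) (ht : Primrec t) :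
        PrimrecPred fun y : ℕ × ((List ℕ × List ℕ) × ℕ) × ℕ =>
          evalnCode (t y.2) y.1 (encode (s y.2.1)) = some 1 :=
      Primrec.eq.comp (primrec_evalnCode.comp ((ht.comp snd).pair
        (fst.pair (Primrec.encode.comp (hs.comp hx))))) (const (some 1))
    refine Pi11.of_forall_exists <| (hprefix.not.or ((haccepts (snd.comp fst) (snd.comp fst)).not.or
      (haccepts (fst.comp fst) snd))).of_eq fun _ => ?_
    simp only [imp_iff_not_or]
  have rejecting : Pi11 {e | ∀ f : ℕ → ℕ, ∃ k t,
      (evalnCode t e (encode (f ↾ k))).isSome ∧ evalnCode t e (encode (f ↾ k)) ≠ some 1} := by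
    have hrun : Primrec fun x : ℕ × List ℕ × ℕ => evalnCode x.2.2 x.1 (encode x.2.1) :=
      primrec_evalnCode.comp ((snd.comp snd).pair (fst.pair (Primrec.encode.comp (fst.comp snd))))
    exact Pi11.of_exists (p := fun e σ t => (evalnCode t e (encode σ)).isSome ∧
      evalnCode t e (encode σ) ≠ some 1) <|
      (Primrec.eq.comp (option_isSome.comp hrun) (const true)).and
        (Primrec.eq.comp hrun (const (some 1))).not
  convert ((total.inter root).inter closed).inter rejecting using 1
  ext e
  simp only [Set.mem_ofPred_eq, Set.mem_inter_iff, wfTreeIndex_iff, isTreeIndex_iff,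
    forall_const, and_assoc]

open Computable in
theorem exists_computable_evalCode_eq {β : Type*} [Primcodable β] {F : ℕ → β → ℕ}
    (hF : Computable₂ F) :
    ∃ g : ℕ → ℕ, Computable g ∧ ∀ n b, evalCode (g n) (encode b) = Part.some (F n b) := by
  have hG : Computable fun m : ℕ => ((decode (α := β) m.unpair.2).map (F m.unpair.1)).getD 0 :=
    option_getD (option_map (Computable.decode.comp (snd.comp unpair))
      (hF.comp (fst.comp (unpair.comp fst)) snd)) (const 0)
  obtain ⟨c, hc⟩ := Code.exists_code.1 (Partrec.nat_iff.1 hG.partrec)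
  obtain ⟨curry, hcurry, hcurry_eval⟩ := Code.smn
  refine ⟨fun n => encode (curry c n),
    Computable.encode.comp (hcurry.comp (const c) Computable.id), fun n b => ?_⟩
  simp [evalCode, hcurry_eval, hc]

theorem wfTreeIndex_iff_of_evalCode_eq {e : ℕ} {T : List ℕ → Prop} [DecidablePred T]
    (he : ∀ σ, evalCode e (encode σ) = Part.some (if T σ then 1 else 0)) :
    WFTreeIndex e ↔
      (T [] ∧ ∀ s u, s <+: u → T u → T s) ∧ ∀ f : ℕ → ℕ, ∃ k, ¬T (f ↾ k) := by
  have hmem (σ : List ℕ) : 1 ∈ evalCode e (encode σ) ↔ T σ := by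
    rw [he, Part.mem_some_iff]
    split_ifs <;> simp [*]
  have hdom (σ : List ℕ) : (evalCode e (encode σ)).Dom := by
    rw [he]; trivial
  simp only [WFTreeIndex, IsTreeIndex, hmem, hdom, forall_const, true_and]

-- Only proper initial segments are tested, so `[]` always belongs to the tree.
def avoidingTree (R : List ℕ → Bool) (σ : List ℕ) : Prop :=
  ∀ j < σ.length, R (σ.take j) = false

instance (R : List ℕ → Bool) : DecidablePred (avoidingTree R) :=
  fun _ => inferInstanceAs (Decidable (∀ _ < _, _))

theorem avoidingTree_nil (R : List ℕ → Bool) : avoidingTree R [] := by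
  simp [avoidingTree]

theorem avoidingTree.of_prefix {R : List ℕ → Bool} {s u : List ℕ} (h : s <+: u)
    (hu : avoidingTree R u) : avoidingTree R s := by
  intro j hj
  rw [List.prefix_iff_eq_take.1 h, List.take_take, min_eq_left hj.le]
  exact hu j (hj.trans_le h.length_le)

theorem exists_not_avoidingTree_iff {R : List ℕ → Bool} {f : ℕ → ℕ} :
    (∃ k, ¬avoidingTree R (f ↾ k)) ↔ ∃ k, R (f ↾ k) = true := by
  simp only [avoidingTree, List.length_ofFn, not_forall, Bool.not_eq_false]
  constructor
  · rintro ⟨k, j, hj, h⟩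
    exact ⟨j, by rwa [take_ofFn hj.le] at h⟩
  · rintro ⟨k, h⟩
    exact ⟨k + 1, k, k.lt_succ_self, by rwa [take_ofFn k.le_succ]⟩

open Computable in
theorem computable_avoidingTree {R : ℕ → List ℕ → Bool} (hR : Computable₂ R) :
    Computable₂ fun n σ => decide (avoidingTree (R n) σ) :=
  (Computable.decide_forall_lt (p := fun (x : ℕ × List ℕ) j => !R x.1 (x.2.take j))
    (Primrec.not.to_comp.comp (hR.comp (fst.comp fst)
      (Primrec.list_take.to_comp.comp snd (snd.comp fst))))
    (list_length.comp snd)).of_eq fun _ => decide_eq_decide.2 (by simp [avoidingTree])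

theorem Pi11.exists_computable_reduction_wfTreeIndex {A : Set ℕ} (hA : Pi11 A) :
    ∃ g : ℕ → ℕ, Computable g ∧ ∀ n, n ∈ A ↔ WFTreeIndex (g n) := by
  obtain ⟨R, hR, hA⟩ := hA
  obtain ⟨g, hg, heval⟩ := exists_computable_evalCode_eq
    (F := fun n σ => if avoidingTree (R n) σ then 1 else 0) <|
    Computable.cond (computable_avoidingTree hR) (Computable.const 1) (Computable.const 0) |>.of_eq
      fun _ => by simp [Bool.cond_decide]
  refine ⟨g, hg, fun n => ?_⟩
  rw [hA, wfTreeIndex_iff_of_evalCode_eq (heval n)]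
  simp only [avoidingTree_nil, true_and, exists_not_avoidingTree_iff]
  exact (and_iff_right fun _ _ => avoidingTree.of_prefix).symm

/-- The set of indices of recursive well-founded trees on ℕ is Π¹₁-complete:
it is Π¹₁, and every Π¹₁ subset of ℕ is many-one reducible to it. -/
theorem wfTree_pi11_complete :
    Pi11 {e | WFTreeIndex e} ∧
    ∀ A : Set ℕ, Pi11 A →
      ∃ g : ℕ → ℕ, Computable g ∧ ∀ n, n ∈ A ↔ WFTreeIndex (g n) :=
  ⟨pi11_setOf_wfTreeIndex, fun _ => Pi11.exists_computable_reduction_wfTreeIndex⟩
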